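/- Suppose h : [0,T) → ℝ is the maximal solution of h'' = (h')² h with h(0) = h'(0) = 1, and set x₃ = x₄ = h. Then the quantity ẋ₃²·(-½x₄² - ½x₃² + x₃x₄ - 2) equals -2(h')², and T < ∞ with h'(t) → ∞ as t → T; hence this quantity tends to -∞ in finite time. -/

import Mathlib

/-- `h` solves `h'' = (h')² h` on `[0, T)`, `T : EReal`. -/
def SolvesGeo (h : ℝ → ℝ) (T : EReal) : Prop :=
  ∀ t : ℝ, 0 ≤ t → (t : EReal) < T →
    DifferentiableAt ℝ h t ∧ DifferentiableAt ℝ (deriv h) t ∧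
    deriv (deriv h) t = (deriv h t) ^ 2 * h t

/-!
With `ρ(x) = exp ((1 - x²)/2)` (`geoDensity`), the equation `h'' = (h')² h` says exactly that
`h' ρ(h)` is conserved, so `h' ρ(h) = 1` under the initial conditions. Hence `F(h(t)) = t` for
`F(H) = ∫₁ᴴ ρ` (`geoTime`), an increasing function bounded by `1` since `ρ(s) ≤ e^{1-s}`. So `h`
cannot live past `sup F`, while `F⁻¹` solves the equation on all of `[0, sup F)`: by maximality
`T = sup F`, and `h = F⁻¹` tends to `∞` there, hence so does `h' = 1/ρ(h)`.
-/

open Real Set Filter Function Topology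

lemma eq_of_hasDerivAt_zero {f : ℝ → ℝ} {a b : ℝ} (hab : a ≤ b)
    (hf : ∀ x ∈ Icc a b, HasDerivAt f 0 x) : f b = f a :=
  constant_of_has_deriv_right_zero (fun x hx => (hf x hx).continuousAt.continuousWithinAt)
    (fun x hx => (hf x (Ico_subset_Icc_self hx)).hasDerivWithinAt) b (right_mem_Icc.2 hab)

section InverseFunction

variable {F : ℝ → ℝ} {y : ℝ}

lemma Continuous.Ioo_sSup_range_subset_range (hF : Continuous F) (a : ℝ) :
    Ioo (F a) (sSup (range F)) ⊆ range F := by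
  rintro z ⟨haz, hz⟩
  obtain ⟨_, ⟨b, rfl⟩, hzb⟩ := exists_lt_of_lt_csSup (range_nonempty F) hz
  exact intermediate_value_univ a b hF ⟨haz.le, hzb.le⟩

lemma StrictMono.continuousAt_invFun (hF : StrictMono F) (hy : range F ∈ 𝓝 y) :
    ContinuousAt (invFun F) y := by
  refine StrictMonoOn.continuousAt_of_image_mem_nhds ?_ hy ?_
  · rintro _ ⟨a, rfl⟩ _ ⟨b, rfl⟩ hab
    simpa only [leftInverse_invFun hF.injective _] using hF.lt_iff_lt.1 hab
  · rw [← range_comp, (leftInverse_invFun hF.injective).comp_eq_id, range_id]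
    exact univ_mem

lemma StrictMono.hasDerivAt_invFun {F' : ℝ} (hF : StrictMono F) (hy : range F ∈ 𝓝 y)
    (hd : HasDerivAt F F' (invFun F y)) (hF' : F' ≠ 0) : HasDerivAt (invFun F) F'⁻¹ y :=
  hd.of_local_left_inverse (hF.continuousAt_invFun hy) hF' <|
    mem_of_superset hy fun _ hz => invFun_eq hz

end InverseFunction

noncomputable def geoDensity (x : ℝ) : ℝ := exp ((1 - x ^ 2) / 2)

lemma geoDensity_pos (x : ℝ) : 0 < geoDensity x := exp_pos _

lemma geoDensity_one : geoDensity 1 = 1 := by norm_num [geoDensity]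

lemma continuous_geoDensity : Continuous geoDensity := by unfold geoDensity; fun_prop

lemma hasDerivAt_geoDensity (x : ℝ) : HasDerivAt geoDensity (-x * geoDensity x) x := by
  refine (((hasDerivAt_pow 2 x).const_sub 1).div_const 2).exp.congr_deriv ?_
  simp only [geoDensity]
  ring

lemma geoDensity_le_exp (x : ℝ) : geoDensity x ≤ exp (1 - x) :=
  exp_le_exp.2 (by nlinarith [sq_nonneg (x - 1)])

lemma tendsto_inv_geoDensity_atTop : Tendsto (fun x => (geoDensity x)⁻¹) atTop atTop := by
  have hinv (x : ℝ) : (geoDensity x)⁻¹ = exp ((x ^ 2 + -1) / 2) := by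
    rw [geoDensity, ← exp_neg]
    congr 1
    ring
  simp only [hinv]
  exact tendsto_exp_atTop.comp
    ((tendsto_atTop_add_const_right _ _ (tendsto_pow_atTop two_ne_zero)).atTop_div_const two_pos)

noncomputable def geoTime (H : ℝ) : ℝ := ∫ x in (1 : ℝ)..H, geoDensity x

lemma hasDerivAt_geoTime (H : ℝ) : HasDerivAt geoTime (geoDensity H) H :=
  (continuous_geoDensity.integral_hasStrictDerivAt 1 H).hasDerivAt

lemma continuous_geoTime : Continuous geoTime :=
  continuous_iff_continuousAt.2 fun H => (hasDerivAt_geoTime H).continuousAt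

lemma strictMono_geoTime : StrictMono geoTime :=
  strictMono_of_deriv_pos fun H => (hasDerivAt_geoTime H).deriv ▸ geoDensity_pos H

lemma geoTime_one : geoTime 1 = 0 := intervalIntegral.integral_same

lemma geoTime_lt_one (H : ℝ) : geoTime H < 1 := by
  rcases le_or_gt H 1 with hH | hH
  · linarith [strictMono_geoTime.monotone hH, geoTime_one]
  have hexp : Continuous fun x : ℝ => exp (1 - x) := by fun_prop
  calc geoTime H ≤ ∫ x in (1 : ℝ)..H, exp (1 - x) :=
        intervalIntegral.integral_mono_on hH.le (continuous_geoDensity.intervalIntegrable _ _)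
          (hexp.intervalIntegrable _ _) fun x _ => geoDensity_le_exp x
    _ = 1 - exp (1 - H) := by
        rw [intervalIntegral.integral_comp_sub_left exp 1, integral_exp]
        norm_num
    _ < 1 := sub_lt_self _ (exp_pos _)

noncomputable def geoBlowupTime : ℝ := sSup (range geoTime)

lemma geoTime_lt_geoBlowupTime (H : ℝ) : geoTime H < geoBlowupTime :=
  (strictMono_geoTime (lt_add_one H)).trans_le <|
    le_csSup ⟨1, by rintro _ ⟨H, rfl⟩; exact (geoTime_lt_one H).le⟩ ⟨H + 1, rfl⟩

lemma geoBlowupTime_pos : 0 < geoBlowupTime := geoTime_one ▸ geoTime_lt_geoBlowupTime 1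

lemma range_geoTime_mem_nhds {y : ℝ} (hy0 : 0 ≤ y) (hy : y < geoBlowupTime) :
    range geoTime ∈ 𝓝 y := by
  have h0 : geoTime 0 < y := (strictMono_geoTime zero_lt_one).trans_le (geoTime_one ▸ hy0)
  exact mem_of_superset (Ioo_mem_nhds h0 hy) (continuous_geoTime.Ioo_sSup_range_subset_range 0)

noncomputable def geoSol : ℝ → ℝ := invFun geoTime

lemma geoSol_geoTime (H : ℝ) : geoSol (geoTime H) = H :=
  leftInverse_invFun strictMono_geoTime.injective H

lemma hasDerivAt_geoSol {y : ℝ} (hy : range geoTime ∈ 𝓝 y) :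
    HasDerivAt geoSol (geoDensity (geoSol y))⁻¹ y :=
  strictMono_geoTime.hasDerivAt_invFun hy (hasDerivAt_geoTime _) (geoDensity_pos _).ne'

lemma hasDerivAt_deriv_geoSol {y : ℝ} (hy : range geoTime ∈ 𝓝 y) :
    HasDerivAt (deriv geoSol) (deriv geoSol y ^ 2 * geoSol y) y := by
  have hρ := geoDensity_pos (geoSol y)
  have heq : deriv geoSol =ᶠ[𝓝 y] fun z => (geoDensity (geoSol z))⁻¹ :=
    (eventually_mem_nhds_iff.2 hy).mono fun z hz => (hasDerivAt_geoSol hz).deriv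
  refine (((hasDerivAt_geoDensity _).comp y (hasDerivAt_geoSol hy)).inv hρ.ne')
    |>.congr_of_eventuallyEq heq |>.congr_deriv ?_
  rw [(hasDerivAt_geoSol hy).deriv]
  simp only [comp_apply]
  field_simp

lemma geoSol_solvesGeo : SolvesGeo geoSol geoBlowupTime := by
  intro t ht0 htT
  have hy := range_geoTime_mem_nhds ht0 (EReal.coe_lt_coe_iff.1 htT)
  exact ⟨(hasDerivAt_geoSol hy).differentiableAt,
    (hasDerivAt_deriv_geoSol hy).differentiableAt, (hasDerivAt_deriv_geoSol hy).deriv⟩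

lemma nonneg_and_coe_lt_of_mem_Icc {T : EReal} {t : ℝ} (htT : (t : EReal) < T) {s : ℝ}
    (hs : s ∈ Icc 0 t) : 0 ≤ s ∧ (s : EReal) < T :=
  ⟨hs.1, (EReal.coe_le_coe_iff.2 hs.2).trans_lt htT⟩

lemma eventually_nhdsLT_geoBlowupTime {T : EReal} (hT : T = geoBlowupTime) :
    ∀ᶠ t : ℝ in 𝓝[<] geoBlowupTime, 0 ≤ t ∧ (t : EReal) < T := by
  filter_upwards [Ioo_mem_nhdsLT geoBlowupTime_pos] with t ht
  exact ⟨ht.1.le, hT ▸ EReal.coe_lt_coe_iff.2 ht.2⟩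

namespace SolvesGeo

variable {h : ℝ → ℝ} {T : EReal}

lemma hasDerivAt (hsol : SolvesGeo h T) {t : ℝ} (ht0 : 0 ≤ t) (htT : (t : EReal) < T) :
    HasDerivAt h (deriv h t) t ∧ HasDerivAt (deriv h) (deriv h t ^ 2 * h t) t := by
  obtain ⟨hd, hd', hode⟩ := hsol t ht0 htT
  exact ⟨hd.hasDerivAt, hode ▸ hd'.hasDerivAt⟩

lemma deriv_mul_geoDensity_eq (hsol : SolvesGeo h T) {t : ℝ} (ht0 : 0 ≤ t)
    (htT : (t : EReal) < T) :
    deriv h t * geoDensity (h t) = deriv h 0 * geoDensity (h 0) := by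
  refine eq_of_hasDerivAt_zero (f := fun s => deriv h s * geoDensity (h s)) ht0 fun s hs => ?_
  obtain ⟨hs0, hsT⟩ := nonneg_and_coe_lt_of_mem_Icc htT hs
  obtain ⟨hd, hd'⟩ := hsol.hasDerivAt hs0 hsT
  refine (hd'.mul ((hasDerivAt_geoDensity (h s)).comp s hd)).congr_deriv ?_
  simp only [comp_apply]
  ring

lemma deriv_eq_inv_geoDensity (hsol : SolvesGeo h T) (hh0 : h 0 = 1) (hh'0 : deriv h 0 = 1)
    {t : ℝ} (ht0 : 0 ≤ t) (htT : (t : EReal) < T) : deriv h t = (geoDensity (h t))⁻¹ :=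
  eq_inv_of_mul_eq_one_left <| by
    rw [hsol.deriv_mul_geoDensity_eq ht0 htT, hh0, hh'0, geoDensity_one, one_mul]

lemma geoTime_comp_eq (hsol : SolvesGeo h T) (hh0 : h 0 = 1) (hh'0 : deriv h 0 = 1)
    {t : ℝ} (ht0 : 0 ≤ t) (htT : (t : EReal) < T) : geoTime (h t) = t := by
  have hconst := eq_of_hasDerivAt_zero (f := fun s => geoTime (h s) - s) ht0 fun s hs => by
    obtain ⟨hs0, hsT⟩ := nonneg_and_coe_lt_of_mem_Icc htT hs
    refine (((hasDerivAt_geoTime (h s)).comp s (hsol.hasDerivAt hs0 hsT).1).sub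
      (hasDerivAt_id s)).congr_deriv ?_
    rw [hsol.deriv_eq_inv_geoDensity hh0 hh'0 hs0 hsT, mul_inv_cancel₀ (geoDensity_pos _).ne']
    norm_num
  simpa [hh0, geoTime_one, sub_eq_zero] using hconst

lemma le_geoBlowupTime (hsol : SolvesGeo h T) (hh0 : h 0 = 1) (hh'0 : deriv h 0 = 1) :
    T ≤ geoBlowupTime := by
  by_contra! hlt
  exact (geoTime_lt_geoBlowupTime _).ne <|
    hsol.geoTime_comp_eq hh0 hh'0 geoBlowupTime_pos.le hlt

lemma eq_geoBlowupTime (hsol : SolvesGeo h T) (hh0 : h 0 = 1) (hh'0 : deriv h 0 = 1)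
    (hmax : ¬ ∃ (T' : EReal) (g : ℝ → ℝ), T < T' ∧
        (∀ t : ℝ, 0 ≤ t → (t : EReal) < T → g t = h t) ∧ SolvesGeo g T') :
    T = geoBlowupTime := by
  refine (hsol.le_geoBlowupTime hh0 hh'0).eq_of_not_lt fun hlt => hmax ?_
  refine ⟨geoBlowupTime, geoSol, hlt, fun t ht0 htT => ?_, geoSol_solvesGeo⟩
  exact (congrArg geoSol (hsol.geoTime_comp_eq hh0 hh'0 ht0 htT)).symm.trans (geoSol_geoTime _)

lemma tendsto_atTop (hsol : SolvesGeo h T) (hh0 : h 0 = 1) (hh'0 : deriv h 0 = 1)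
    (hT : T = geoBlowupTime) : Tendsto h (𝓝[<] geoBlowupTime) atTop := by
  refine Filter.tendsto_atTop.2 fun M => ?_
  filter_upwards [eventually_nhdsLT_geoBlowupTime hT,
    Ioo_mem_nhdsLT (geoTime_lt_geoBlowupTime M)] with t ⟨ht0, htT⟩ ht
  rw [← strictMono_geoTime.le_iff_le, hsol.geoTime_comp_eq hh0 hh'0 ht0 htT]
  exact ht.1.le

lemma tendsto_deriv_atTop (hsol : SolvesGeo h T) (hh0 : h 0 = 1) (hh'0 : deriv h 0 = 1)
    (hT : T = geoBlowupTime) : Tendsto (deriv h) (𝓝[<] geoBlowupTime) atTop := by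
  refine (tendsto_inv_geoDensity_atTop.comp (hsol.tendsto_atTop hh0 hh'0 hT)).congr' ?_
  filter_upwards [eventually_nhdsLT_geoBlowupTime hT] with t ⟨ht0, htT⟩
  exact (hsol.deriv_eq_inv_geoDensity hh0 hh'0 ht0 htT).symm

end SolvesGeo

theorem stmt_15_general (h : ℝ → ℝ) (T : EReal)
    (hh0 : h 0 = 1) (hh'0 : deriv h 0 = 1)
    (hsol : SolvesGeo h T)
    (hmax : ¬ ∃ (T' : EReal) (g : ℝ → ℝ), T < T' ∧
        (∀ t : ℝ, 0 ≤ t → (t : EReal) < T → g t = h t) ∧ SolvesGeo g T') :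
    -- with x₃ = x₄ = h, the Ricci quantity simplifies to -2(h')²
    (∀ t : ℝ,
      (deriv h t) ^ 2 *
        (-(1 / 2) * (h t) ^ 2 - (1 / 2) * (h t) ^ 2 + h t * h t - 2) =
      -2 * (deriv h t) ^ 2) ∧
    T < ⊤ ∧
    Filter.Tendsto (deriv h) (nhdsWithin T.toReal (Set.Iio T.toReal)) Filter.atTop ∧
    Filter.Tendsto
      (fun t : ℝ => (deriv h t) ^ 2 *
        (-(1 / 2) * (h t) ^ 2 - (1 / 2) * (h t) ^ 2 + h t * h t - 2))
      (nhdsWithin T.toReal (Set.Iio T.toReal)) Filter.atBot := by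
  have hricci (t : ℝ) : (deriv h t) ^ 2 *
      (-(1 / 2) * (h t) ^ 2 - (1 / 2) * (h t) ^ 2 + h t * h t - 2) = -2 * (deriv h t) ^ 2 := by
    ring
  have hT := hsol.eq_geoBlowupTime hh0 hh'0 hmax
  have hTreal : T.toReal = geoBlowupTime := by rw [hT, EReal.toReal_coe]
  have hderiv := hsol.tendsto_deriv_atTop hh0 hh'0 hT
  refine ⟨hricci, hT ▸ EReal.coe_lt_top _, hTreal ▸ hderiv, ?_⟩
  simp only [hricci, hTreal]
  exact ((tendsto_pow_atTop two_ne_zero).comp hderiv).const_mul_atTop_of_neg (by norm_num)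

theorem stmt_15 (h : ℝ → ℝ) (T : EReal) (hT : 0 < T)
    (hh0 : h 0 = 1) (hh'0 : deriv h 0 = 1)
    (hsol : SolvesGeo h T)
    (hmax : ¬ ∃ (T' : EReal) (g : ℝ → ℝ), T < T' ∧
        (∀ t : ℝ, 0 ≤ t → (t : EReal) < T → g t = h t) ∧ SolvesGeo g T') :
    -- with x₃ = x₄ = h, the Ricci quantity simplifies to -2(h')²
    (∀ t : ℝ,
      (deriv h t) ^ 2 *
        (-(1 / 2) * (h t) ^ 2 - (1 / 2) * (h t) ^ 2 + h t * h t - 2) =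
      -2 * (deriv h t) ^ 2) ∧
    T < ⊤ ∧
    Filter.Tendsto (deriv h) (nhdsWithin T.toReal (Set.Iio T.toReal)) Filter.atTop ∧
    Filter.Tendsto
      (fun t : ℝ => (deriv h t) ^ 2 *
        (-(1 / 2) * (h t) ^ 2 - (1 / 2) * (h t) ^ 2 + h t * h t - 2))
      (nhdsWithin T.toReal (Set.Iio T.toReal)) Filter.atBot :=
  stmt_15_general h T hh0 hh'0 hsol hmax
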